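/- Let q be a prime power and A, A₀ ∈ GL₂(F_q) with determinants λ = det(A) and λ₀ = det(A₀), and let σ(A,A₀) ∈ M₂(F_q) be the σ-product of A and A₀. Then: (i) det(σ(A,A₀)) = λ·λ₀², so σ(A,A₀) ∈ GL₂(F_q); (ii) for every integer r ≥ 0, the polynomial A₀∘F_{A,r} divides F_{σ(A,A₀),r}; (iii) if f ∈ F_q[x] is a monic irreducible polynomial of degree at least 3 such that [A]∘f = [A₀]∘f = f, then σ(A,A₀) = ε·λ₀·A for some ε ∈ {1,−1}. -/

import Mathlib

/-!
`σ(A, A₀) = A₀ * A * adj A₀`, which gives the determinant.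

For the divisibility put `Q = q ^ r`. Homogenizing `F_{A,r}` to degree `Q + 1` and substituting
`(u, v) = (a₀X + c₀, b₀X + d₀)`, the Frobenius identities `u ^ Q = a₀X ^ Q + c₀` and
`v ^ Q = b₀X ^ Q + d₀` produce exactly `F_{σ(A,A₀),r}`; `A₀ ∘ F_{A,r}` is the homogenization to the
actual degree of `F_{A,r}`, which differs from it by a power of `v`.

For the last part let `α` be a root of `f`. If `[M] ∘ f = f` then `(aα + c) / (bα + d)` is again
a root of `f`, hence the image of `α` under an `F`-automorphism of `F(α)`. The Galois group of a
finite field is cyclic, so the automorphisms coming from `A` and `A₀` commute; at `α` this says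
that `A * A₀` and `A₀ * A` move `α` to the same point. As `α` has degree at least `3` over `F`,
this forces `A₀ * A = c • (A * A₀)`; comparing determinants gives `c = ±1`, and then
`σ(A, A₀) = c • A * A₀ * adj A₀ = (c * det A₀) • A`.
-/

open Polynomial

noncomputable section

namespace PGLAct

variable {F : Type} [Field F]

/-- The composition `A ∘ f = ∑ aᵢ (a x + c)^i (b x + d)^{k-i}` for `A = [[a,b],[c,d]]`. -/
def mcirc (A : Matrix (Fin 2) (Fin 2) F) (f : F[X]) : F[X] :=
  ∑ i ∈ Finset.range (f.natDegree + 1),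
    C (f.coeff i) * (C (A 0 0) * X + C (A 1 0)) ^ i *
      (C (A 0 1) * X + C (A 1 1)) ^ (f.natDegree - i)

/-- The composition `[A] ∘ f`: the monic normalization of `A ∘ f`. -/
def pcirc (A : Matrix (Fin 2) (Fin 2) F) (f : F[X]) : F[X] :=
  C (mcirc A f).leadingCoeff⁻¹ * mcirc A f

/-- The subgroup of scalar matrices in `GL₂(F)`. -/
def scalarSub (F : Type) [Field F] : Subgroup (GL (Fin 2) F) :=
  (Units.map ((Matrix.scalar (Fin 2)).toMonoidHom : F →* Matrix (Fin 2) (Fin 2) F)).range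

instance scalarSub_normal (F : Type) [Field F] : (scalarSub F).Normal := by
  constructor
  intro n hn g
  obtain ⟨u, hu⟩ := hn
  refine ⟨u, ?_⟩
  ext : 1
  have hcomm : Commute ((Matrix.scalar (Fin 2)) (u : F)) (g : Matrix (Fin 2) (Fin 2) F) :=
    Matrix.scalar_commute _ (fun r' => Commute.all _ r') _
  have hval : (n : Matrix (Fin 2) (Fin 2) F) = (Matrix.scalar (Fin 2)) (u : F) := by
    rw [← hu]; rfl
  calc ((Units.map ((Matrix.scalar (Fin 2)).toMonoidHom : F →* Matrix (Fin 2) (Fin 2) F)) u :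
        GL (Fin 2) F).val
      = (Matrix.scalar (Fin 2)) (u : F) := rfl
    _ = (g : Matrix (Fin 2) (Fin 2) F) * (Matrix.scalar (Fin 2)) (u : F)
        * ((g⁻¹ : GL (Fin 2) F) : Matrix (Fin 2) (Fin 2) F) := by
        rw [← hcomm.eq, mul_assoc, ← Units.val_mul, mul_inv_cancel]
        simp
    _ = ((g * n * g⁻¹ : GL (Fin 2) F) : Matrix (Fin 2) (Fin 2) F) := by
        simp [Units.val_mul, hval]

/-- `PGL₂(F)`, the projective general linear group. -/
def PGL2 (F : Type) [Field F] : Type := GL (Fin 2) F ⧸ scalarSub F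

instance : Group (PGL2 F) := inferInstanceAs (Group (GL (Fin 2) F ⧸ scalarSub F))

/-- The natural projection `GL₂(F) → PGL₂(F)`, `A ↦ [A]`. -/
def toPGL (F : Type) [Field F] : GL (Fin 2) F →* PGL2 F := QuotientGroup.mk' (scalarSub F)

/-- The polynomial `F_{A,r} = b x^{q^r+1} - a x^{q^r} + d x - c`. -/
def FAr [Fintype F] (A : Matrix (Fin 2) (Fin 2) F) (r : ℕ) : F[X] :=
  C (A 0 1) * X ^ (Fintype.card F ^ r + 1) - C (A 0 0) * X ^ (Fintype.card F ^ r)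
    + C (A 1 1) * X - C (A 1 0)


/-- The σ-product of `A = [[a,b],[c,d]]` and `A₀ = [[a₀,b₀],[c₀,d₀]]`. -/
def sigmaProd (A A0 : Matrix (Fin 2) (Fin 2) F) : Matrix (Fin 2) (Fin 2) F :=
  !![-(A 0 1 * (A0 0 0 * A0 1 0) - A 0 0 * (A0 0 0 * A0 1 1) + A 1 1 * (A0 1 0 * A0 0 1)
        - A 1 0 * (A0 0 1 * A0 1 1)),
     A 0 1 * A0 0 0 ^ 2 - A 0 0 * (A0 0 0 * A0 0 1) + A 1 1 * (A0 0 0 * A0 0 1)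
        - A 1 0 * A0 0 1 ^ 2;
     -(A 0 1 * A0 1 0 ^ 2 - A 0 0 * (A0 1 0 * A0 1 1) + A 1 1 * (A0 1 1 * A0 1 0)
        - A 1 0 * A0 1 1 ^ 2),
     A 0 1 * (A0 0 0 * A0 1 0) - A 0 0 * (A0 1 0 * A0 0 1) + A 1 1 * (A0 1 1 * A0 0 0)
        - A 1 0 * (A0 0 1 * A0 1 1)]

end PGLAct

theorem AlgHom.commute_of_finite {F K : Type*} [Field F] [Field K] [_root_.Finite K] [Algebra F K]
    (φ ψ : K →ₐ[F] K) : Commute φ ψ := by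
  let e := Algebra.IsAlgebraic.algEquivEquivAlgHom F K
  have := (IsCyclic.commGroup (α := Gal(K/F))).mul_comm (e.symm φ) (e.symm ψ)
  simpa [Commute, SemiconjBy] using congrArg e this

namespace PGLAct

section HomEval

variable {R : Type*} [CommSemiring R]

/-- `homEval u v N f = v ^ N * f (u / v)`, the degree-`N` homogenization of `f` evaluated at
`(u, v)`. -/
def homEval (u v : R[X]) (N : ℕ) (f : R[X]) : R[X] :=
  ∑ i ∈ Finset.range (N + 1), C (f.coeff i) * u ^ i * v ^ (N - i)

def linForm (M : Matrix (Fin 2) (Fin 2) R) (j : Fin 2) : R[X] := C (M 0 j) * X + C (M 1 j)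

theorem homEval_add (u v : R[X]) (N : ℕ) (f g : R[X]) :
    homEval u v N (f + g) = homEval u v N f + homEval u v N g := by
  simp only [homEval, coeff_add, C_add, add_mul, Finset.sum_add_distrib]

theorem homEval_C_mul_X_pow (u v : R[X]) {N j : ℕ} (h : j ≤ N) (e : R) :
    homEval u v N (C e * X ^ j) = C e * u ^ j * v ^ (N - j) := by
  rw [homEval, Finset.sum_eq_single_of_mem j (Finset.mem_range.2 (by omega))]
  · simp
  · intro i _ hij
    simp [coeff_X_pow, hij]

theorem homEval_succ (u v : R[X]) {N : ℕ} {f : R[X]} (h : f.natDegree ≤ N) :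
    homEval u v (N + 1) f = v * homEval u v N f := by
  rw [homEval, Finset.sum_range_succ, coeff_eq_zero_of_natDegree_lt (by omega), C_0, zero_mul,
    zero_mul, add_zero, homEval, Finset.mul_sum]
  refine Finset.sum_congr rfl fun i hi => ?_
  rw [Finset.mem_range] at hi
  rw [show N + 1 - i = N - i + 1 by omega, pow_succ]
  ring

theorem homEval_natDegree_dvd (u v : R[X]) {N : ℕ} {f : R[X]} (h : f.natDegree ≤ N) :
    homEval u v f.natDegree f ∣ homEval u v N f := by
  induction N, h using Nat.le_induction with
  | base => rfl
  | succ N hN ih => exact (homEval_succ u v hN).symm ▸ Dvd.dvd.mul_left ih v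

end HomEval

section Frobenius

variable {F : Type*} [Field F] [Fintype F]

theorem pow_card_pow_eq_expand (p : F[X]) (r : ℕ) :
    p ^ Fintype.card F ^ r = expand F (Fintype.card F ^ r) p := by
  induction r with
  | zero => simp
  | succ r ih => rw [pow_succ, pow_mul, ih, ← FiniteField.expand_card, ← expand_mul, mul_comm]

theorem linForm_pow_card_pow (M : Matrix (Fin 2) (Fin 2) F) (j : Fin 2) (r : ℕ) :
    linForm M j ^ Fintype.card F ^ r = C (M 0 j) * X ^ Fintype.card F ^ r + C (M 1 j) := by
  rw [pow_card_pow_eq_expand]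
  simp [linForm]

end Frobenius

variable {F : Type} [Field F]

theorem mcirc_eq_homEval (M : Matrix (Fin 2) (Fin 2) F) (f : F[X]) :
    mcirc M f = homEval (linForm M 0) (linForm M 1) f.natDegree f := rfl

theorem natDegree_FAr_le [Fintype F] (A : Matrix (Fin 2) (Fin 2) F) (r : ℕ) :
    (FAr A r).natDegree ≤ Fintype.card F ^ r + 1 := by
  unfold FAr
  compute_degree

theorem sigmaProd_eq_mul_mul_adjugate (A A0 : Matrix (Fin 2) (Fin 2) F) :
    sigmaProd A A0 = A0 * A * A0.adjugate := by
  ext i j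
  fin_cases i <;> fin_cases j <;>
    simp only [sigmaProd, Fin.isValue, Fin.zero_eta, Fin.mk_one, Matrix.of_apply,
      Matrix.cons_val', Matrix.cons_val_zero, Matrix.cons_val_one, Matrix.cons_val_fin_one,
      Matrix.adjugate_fin_two, Matrix.mul_apply, Fin.sum_univ_two] <;> ring

theorem det_sigmaProd (A A0 : Matrix (Fin 2) (Fin 2) F) :
    (sigmaProd A A0).det = A.det * A0.det ^ 2 := by
  rw [sigmaProd_eq_mul_mul_adjugate, Matrix.det_mul, Matrix.det_mul, Matrix.det_adjugate]
  simp only [Fintype.card_fin]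
  ring

theorem sigmaProd_eq_smul_of_mul_eq_smul {A A0 : Matrix (Fin 2) (Fin 2) F} {c : F}
    (h : A0 * A = c • (A * A0)) : sigmaProd A A0 = (c * A0.det) • A := by
  rw [sigmaProd_eq_mul_mul_adjugate, h, Matrix.smul_mul, Matrix.mul_assoc, Matrix.mul_adjugate,
    Matrix.mul_smul, Matrix.mul_one, smul_smul]

theorem homEval_FAr [Fintype F] (A A0 : Matrix (Fin 2) (Fin 2) F) (r : ℕ) :
    homEval (linForm A0 0) (linForm A0 1) (Fintype.card F ^ r + 1) (FAr A r) =
      FAr (sigmaProd A A0) r := by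
  set Q := Fintype.card F ^ r
  have hFAr : FAr A r = C (A 0 1) * X ^ (Q + 1) + C (-A 0 0) * X ^ Q + C (A 1 1) * X ^ 1
      + C (-A 1 0) * X ^ 0 := by
    simp only [FAr, C_neg]
    ring
  rw [hFAr, homEval_add, homEval_add, homEval_add, homEval_C_mul_X_pow _ _ le_rfl,
    homEval_C_mul_X_pow _ _ (by omega), homEval_C_mul_X_pow _ _ (by omega),
    homEval_C_mul_X_pow _ _ (by omega), Nat.sub_self, Nat.add_sub_cancel_left,
    Nat.add_sub_cancel, Nat.sub_zero, pow_succ _ Q, pow_succ (linForm A0 1) Q,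
    linForm_pow_card_pow, linForm_pow_card_pow]
  simp only [FAr, sigmaProd, linForm, Matrix.of_apply, Matrix.cons_val', Matrix.cons_val_zero,
    Matrix.cons_val_one, Matrix.empty_val', Matrix.cons_val_fin_one, map_neg,
    map_sub, map_add, map_mul, map_pow]
  ring

theorem mcirc_FAr_dvd [Fintype F] (A A0 : Matrix (Fin 2) (Fin 2) F) (r : ℕ) :
    mcirc A0 (FAr A r) ∣ FAr (sigmaProd A A0) r :=
  homEval_FAr A A0 r ▸ homEval_natDegree_dvd _ _ (natDegree_FAr_le A r)

section Mobius

variable {K : Type*} [Field K] [Algebra F K]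

def mobius (M : Matrix (Fin 2) (Fin 2) F) (x : K) : K :=
  aeval x (linForm M 0) / aeval x (linForm M 1)

theorem aeval_linForm (M : Matrix (Fin 2) (Fin 2) F) (j : Fin 2) (x : K) :
    aeval x (linForm M j) = algebraMap F K (M 0 j) * x + algebraMap F K (M 1 j) := by
  simp [linForm]

theorem aeval_linForm_mul (M N : Matrix (Fin 2) (Fin 2) F) (j : Fin 2) (x : K) :
    aeval x (linForm (M * N) j) =
      aeval x (linForm M 0) * algebraMap F K (N 0 j) +
        aeval x (linForm M 1) * algebraMap F K (N 1 j) := by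
  simp only [aeval_linForm, Matrix.mul_apply, Fin.sum_univ_two, map_add, map_mul]
  ring

theorem mobius_mobius (M N : Matrix (Fin 2) (Fin 2) F) {x : K}
    (hx : aeval x (linForm M 1) ≠ 0) : mobius N (mobius M x) = mobius (M * N) x := by
  have key : ∀ j, aeval (mobius M x) (linForm N j) = aeval x (linForm (M * N) j) /
      aeval x (linForm M 1) := fun j => by
    rw [aeval_linForm, aeval_linForm_mul, mobius]
    field_simp
  rw [mobius, key, key, div_div_div_cancel_right₀ hx, mobius]

theorem map_mobius {L : Type*} [Field L] [Algebra F L] (φ : K →ₐ[F] L)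
    (M : Matrix (Fin 2) (Fin 2) F) (x : K) : φ (mobius M x) = mobius M (φ x) := by
  simp only [mobius, map_div₀, aeval_algHom_apply]

theorem aeval_mcirc (M : Matrix (Fin 2) (Fin 2) F) (f : F[X]) {x : K}
    (hx : aeval x (linForm M 1) ≠ 0) :
    aeval x (mcirc M f) = aeval x (linForm M 1) ^ f.natDegree * aeval (mobius M x) f := by
  rw [mcirc_eq_homEval, homEval, map_sum, aeval_eq_sum_range (p := f), Finset.mul_sum]
  refine Finset.sum_congr rfl fun i hi => ?_
  have hi : i ≤ f.natDegree := Nat.lt_succ_iff.1 (Finset.mem_range.1 hi)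
  rw [mobius, div_pow, ← Nat.sub_add_cancel hi, pow_add, Nat.sub_add_cancel hi]
  simp only [map_mul, map_pow, aeval_C, Algebra.smul_def]
  field_simp

theorem eq_zero_of_aeval_eq_zero_of_natDegree_lt {x : K} {g : F[X]}
    (hg : g.natDegree < (minpoly F x).natDegree) (h : aeval x g = 0) : g = 0 := by
  by_contra hne
  exact absurd (natDegree_le_natDegree (minpoly.degree_le_of_ne_zero F x hne h)) (not_le.2 hg)

theorem eq_zero_of_quadratic_eq_zero {x : K} (hx : 2 < (minpoly F x).natDegree) {u v w : F}
    (h : algebraMap F K u * x ^ 2 + algebraMap F K v * x + algebraMap F K w = 0) :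
    u = 0 ∧ v = 0 ∧ w = 0 := by
  have hg := eq_zero_of_aeval_eq_zero_of_natDegree_lt (g := C u * X ^ 2 + C v * X + C w)
    (lt_of_le_of_lt (by compute_degree) hx) (by simpa [Algebra.smul_def] using h)
  refine ⟨?_, ?_, ?_⟩
  · simpa using congrArg (coeff · 2) hg
  · simpa using congrArg (coeff · 1) hg
  · simpa using congrArg (coeff · 0) hg

theorem aeval_linForm_ne_zero {x : K} (hx : 1 < (minpoly F x).natDegree)
    {M : Matrix (Fin 2) (Fin 2) F} (hM : M.det ≠ 0) (j : Fin 2) : aeval x (linForm M j) ≠ 0 := by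
  intro h
  have hj := eq_zero_of_aeval_eq_zero_of_natDegree_lt
    (lt_of_le_of_lt (by unfold linForm; compute_degree) hx) h
  have h1 : M 0 j = 0 := by simpa [linForm] using congrArg (coeff · 1) hj
  have h0 : M 1 j = 0 := by simpa [linForm] using congrArg (coeff · 0) hj
  fin_cases j <;> simp_all [Matrix.det_fin_two]

theorem exists_smul_eq_of_mobius_eq {x : K} (hx : 2 < (minpoly F x).natDegree)
    {P Q : Matrix (Fin 2) (Fin 2) F} (hP : P.det ≠ 0) (hQ : Q.det ≠ 0)
    (h : mobius P x = mobius Q x) : ∃ c : F, Q = c • P := by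
  have hx1 := one_lt_two.trans hx
  rw [mobius, mobius, div_eq_div_iff (aeval_linForm_ne_zero hx1 hP 1)
    (aeval_linForm_ne_zero hx1 hQ 1)] at h
  simp only [aeval_linForm] at h
  -- the three coefficients say that `P * !![0, 1; -1, 0] * Qᵀ` is antisymmetric
  obtain ⟨h2, h1, h0⟩ := eq_zero_of_quadratic_eq_zero hx
    (u := P 0 0 * Q 0 1 - Q 0 0 * P 0 1)
    (v := P 0 0 * Q 1 1 + P 1 0 * Q 0 1 - Q 0 0 * P 1 1 - Q 1 0 * P 0 1)
    (w := P 1 0 * Q 1 1 - Q 1 0 * P 1 1)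
    (by simp only [map_sub, map_add, map_mul]; linear_combination h)
  have hdet : P 0 0 * P 1 1 - P 0 1 * P 1 0 ≠ 0 := by rwa [← Matrix.det_fin_two]
  refine ⟨(P 0 0 * Q 1 1 - P 0 1 * Q 1 0) / P.det, ?_⟩
  ext i j
  rw [Matrix.smul_apply, smul_eq_mul, Matrix.det_fin_two, div_mul_eq_mul_div, eq_div_iff hdet]
  fin_cases i <;> fin_cases j <;> simp only [Fin.zero_eta, Fin.mk_one, Fin.isValue]
  · linear_combination -P 0 0 * h1 + P 1 0 * h2
  · linear_combination -P 0 1 * h1 + P 1 1 * h2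
  · linear_combination -P 0 0 * h0
  · linear_combination -P 0 1 * h0

theorem aeval_mobius_eq_zero_of_pcirc_eq {M : Matrix (Fin 2) (Fin 2) F} {f : F[X]} (hf : f ≠ 0) (hM : pcirc M f = f) {x : K}
    (hx : aeval x f = 0) (hden : aeval x (linForm M 1) ≠ 0) : aeval (mobius M x) f = 0 := by
  have hmcirc : mcirc M f ≠ 0 := fun h => hf (by rw [← hM, pcirc, h, mul_zero])
  have hroot : aeval x (pcirc M f) = 0 := by rwa [hM]
  rw [pcirc, map_mul, aeval_C, aeval_mcirc M f hden] at hroot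
  simpa [hmcirc, hden] using hroot

end Mobius

theorem exists_mul_eq_smul_mul_of_pcirc_eq [Finite F] {A A0 : Matrix (Fin 2) (Fin 2) F}
    (hA : A.det ≠ 0) (hA0 : A0.det ≠ 0) {f : F[X]} (hirr : Irreducible f)
    (hdeg : 3 ≤ f.natDegree) (hfA : pcirc A f = f) (hfA0 : pcirc A0 f = f) :
    ∃ c : F, A0 * A = c • (A * A0) := by
  have : Fact (Irreducible f) := ⟨hirr⟩
  have hf : f ≠ 0 := hirr.ne_zero
  let α := AdjoinRoot.root f
  have hα : 2 < (minpoly F α).natDegree := by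
    rw [AdjoinRoot.minpoly_root hf, natDegree_mul_C (inv_ne_zero (leadingCoeff_ne_zero.2 hf))]
    omega
  have hden : ∀ {M : Matrix (Fin 2) (Fin 2) F}, M.det ≠ 0 → aeval α (linForm M 1) ≠ 0 :=
    fun hM => aeval_linForm_ne_zero (one_lt_two.trans hα) hM 1
  have hroot : ∀ {M}, M.det ≠ 0 → pcirc M f = f → aeval (mobius M α) f = 0 := fun hM h =>
    aeval_mobius_eq_zero_of_pcirc_eq hf h (AdjoinRoot.aeval_eq f ▸ AdjoinRoot.mk_self) (hden hM)
  let φ := AdjoinRoot.liftAlgHom f (Algebra.ofId F _) _ (hroot hA hfA)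
  let ψ := AdjoinRoot.liftAlgHom f (Algebra.ofId F _) _ (hroot hA0 hfA0)
  have hφ : φ α = mobius A α := AdjoinRoot.liftAlgHom_root ..
  have hψ : ψ α = mobius A0 α := AdjoinRoot.liftAlgHom_root ..
  have : Module.Finite F (AdjoinRoot f) := (AdjoinRoot.powerBasis hf).finite
  have : Finite (AdjoinRoot f) := Module.finite_of_finite F
  have hcomm : mobius (A * A0) α = mobius (A0 * A) α := calc
    _ = φ (ψ α) := by rw [hψ, map_mobius, hφ, mobius_mobius _ _ (hden hA)]
    _ = ψ (φ α) := DFunLike.congr_fun (AlgHom.commute_of_finite φ ψ).eq α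
    _ = _ := by rw [hφ, map_mobius, hψ, mobius_mobius _ _ (hden hA0)]
  exact exists_smul_eq_of_mobius_eq hα (by rw [Matrix.det_mul]; exact mul_ne_zero hA hA0)
    (by rw [Matrix.det_mul]; exact mul_ne_zero hA0 hA) hcomm

theorem eq_one_or_eq_neg_one_of_mul_eq_smul {A A0 : Matrix (Fin 2) (Fin 2) F} {c : F}
    (hdet : A.det * A0.det ≠ 0) (h : A0 * A = c • (A * A0)) : c = 1 ∨ c = -1 := by
  have hdet' := congrArg Matrix.det h
  rw [Matrix.det_smul, Matrix.det_mul, Matrix.det_mul, Fintype.card_fin] at hdet'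
  refine mul_self_eq_one_iff.1 (mul_right_cancel₀ hdet ?_)
  linear_combination -hdet'

end PGLAct

/-- Properties of the σ-product: its determinant is `det(A)·det(A₀)²` (so it
lies in `GL₂`), `A₀∘F_{A,r}` divides `F_{σ(A,A₀),r}`, and if a monic irreducible `f` of degree
`≥ 3` is fixed by both `[A]` and `[A₀]` then `σ(A,A₀) = ε·det(A₀)·A` with `ε = ±1`. -/
theorem sigma_product_properties {F : Type} [Field F] [Fintype F] (A A0 : GL (Fin 2) F) :
    (PGLAct.sigmaProd A.val A0.val).det = A.val.det * A0.val.det ^ 2 ∧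
    IsUnit (PGLAct.sigmaProd A.val A0.val).det ∧
    (∀ r : ℕ, PGLAct.mcirc A0.val (PGLAct.FAr A.val r) ∣
      PGLAct.FAr (PGLAct.sigmaProd A.val A0.val) r) ∧
    (∀ f : F[X], f.Monic → Irreducible f → 3 ≤ f.natDegree →
      PGLAct.pcirc A.val f = f → PGLAct.pcirc A0.val f = f →
      ∃ ε : F, (ε = 1 ∨ ε = -1) ∧
        PGLAct.sigmaProd A.val A0.val = (ε * A0.val.det) • A.val) := by
  have hA := Matrix.isUnits_det_units A
  have hA0 := Matrix.isUnits_det_units A0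
  refine ⟨PGLAct.det_sigmaProd _ _, ?_, PGLAct.mcirc_FAr_dvd _ _, ?_⟩
  · rw [PGLAct.det_sigmaProd]
    exact hA.mul (hA0.pow 2)
  · intro f _ hirr hdeg hfA hfA0
    obtain ⟨c, hc⟩ :=
      PGLAct.exists_mul_eq_smul_mul_of_pcirc_eq hA.ne_zero hA0.ne_zero hirr hdeg hfA hfA0
    exact ⟨c, PGLAct.eq_one_or_eq_neg_one_of_mul_eq_smul (mul_ne_zero hA.ne_zero hA0.ne_zero) hc,
      PGLAct.sigmaProd_eq_smul_of_mul_eq_smul hc⟩
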